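/- arXiv:2509.16056 — 4 statements merged into one kernel-verified Lean document; each statement's English description precedes it below -/
import Mathlib

section
/- Let a commutative square in an abelian category with rows ∂ : A → B and ∂' : A' → B' and vertical maps f : A → A', g : B → B' be given. If g is an epimorphism and the square is cartesian (a pullback), then f induces an isomorphism ker ∂ ≅ ker ∂' and g induces an isomorphism coker ∂ ≅ coker ∂'. -/
open CategoryTheory CategoryTheory.Limits

lemma CategoryTheory.Limits.epi_cokernel_map_of_epi {C : Type*} [Category C]
    [HasZeroMorphisms C] {X₁ X₂ X₃ X₄ : C} {t : X₁ ⟶ X₂} {l : X₁ ⟶ X₃} {r : X₂ ⟶ X₄}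
    {b : X₃ ⟶ X₄} [HasCokernel t] [HasCokernel b] [Epi r] (w : t ≫ r = l ≫ b) :
    Epi (cokernel.map t b l r w) :=
  have : Epi (cokernel.π t ≫ cokernel.map t b l r w) := by
    rw [cokernel.π_desc]
    infer_instance
  epi_of_epi (cokernel.π t) _

/-- In an abelian category, given a commutative square with rows
`∂ : A ⟶ B`, `∂' : A' ⟶ B'` and vertical maps `f : A ⟶ A'`, `g : B ⟶ B'`,
if `g` is an epimorphism and the square is cartesian (a pullback), then the induced
maps on kernels and cokernels are isomorphisms. -/
theorem stmt1 {C : Type*} [Category C] [Abelian C]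
    {A B A' B' : C} (d : A ⟶ B) (d' : A' ⟶ B') (f : A ⟶ A') (g : B ⟶ B')
    [Epi g] (hpb : IsPullback d f g d') :
    IsIso (kernel.map d d' f g hpb.w) ∧ IsIso (cokernel.map d d' f g hpb.w) := by
  have := Abelian.mono_cokernel_map_of_isPullback hpb
  have := epi_cokernel_map_of_epi hpb.w
  exact ⟨isIso_kernel_map_of_isPullback hpb, isIso_of_mono_of_epi _⟩
end

section
/- Let F be a field, X = Spec A an affine F-scheme, S an F-scheme, and let 0 → F → ∏_{i∈V} F_i ⇉ ∏_{k∈E} F_k be an equalizer diagram of field extensions of F (indexed by vertices and edges of an oriented connected graph, with inclusions F_i ↪ F_k when k is adjacent to i). Then X(S) → ∏_i X(S_{F_i}) ⇉ ∏_k X(S_{F_k}) is an equalizer diagram of sets. -/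
/-!
An `F`-basis of `B` identifies `B ⊗[F] K` with `ι →₀ K`, naturally in `K`. A compatible family
of elements of the `B ⊗[F] F_i` therefore descends coordinate by coordinate, because `F` is the
equalizer of the `F_i`. Applying this to the images `ψ i a` of each `a : A` gives a unique
`φ a : B`, and uniqueness forces `φ` to be an algebra map.
-/

open scoped TensorProduct

namespace Module.Basis

variable {R M N N' ι : Type*} [CommSemiring R] [AddCommMonoid M] [Module R M]
  [AddCommMonoid N] [Module R N] [AddCommMonoid N'] [Module R N'] [DecidableEq ι]

noncomputable def tensorRepr (𝔅 : Basis ι R M) : M ⊗[R] N ≃ₗ[R] ι →₀ N :=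
  TensorProduct.congr 𝔅.repr (LinearEquiv.refl R N) ≪≫ₗ TensorProduct.finsuppScalarLeft R N ι

@[simp]
theorem tensorRepr_tmul_apply (𝔅 : Basis ι R M) (m : M) (n : N) (j : ι) :
    𝔅.tensorRepr (m ⊗ₜ[R] n) j = 𝔅.repr m j • n := by
  simp [tensorRepr]

theorem tensorRepr_tmul_one {K : Type*} [Semiring K] [Algebra R K] (𝔅 : Basis ι R M) (m : M) :
    𝔅.tensorRepr (m ⊗ₜ[R] (1 : K)) =
      Finsupp.mapRange.linearMap (Algebra.linearMap R K) (𝔅.repr m) := by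
  ext j
  simp [Algebra.smul_def]

theorem tensorRepr_lTensor (𝔅 : Basis ι R M) (f : N →ₗ[R] N') (t : M ⊗[R] N) :
    𝔅.tensorRepr (f.lTensor M t) = Finsupp.mapRange.linearMap f (𝔅.tensorRepr t) := by
  induction t using TensorProduct.induction_on with
  | zero => simp
  | tmul m n => ext j; simp
  | add u v hu hv => simp only [map_add, hu, hv]

end Module.Basis

section FactorizationSystem

variable {F : Type*} [Field F] {V E : Type*} {l r : E → V} {Fi : V → Type*} {Fk : E → Type*}
  [∀ i, Semiring (Fi i)] [∀ i, Algebra F (Fi i)] [∀ k, Semiring (Fk k)] [∀ k, Algebra F (Fk k)]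

/-- `F → ∏ i, Fi i ⇉ ∏ k, Fk k` is an equalizer; edge `k` joins the vertices `l k` and `r k`. -/
def IsFactorizationSystem (ιl : ∀ k, Fi (l k) →ₐ[F] Fk k) (ιr : ∀ k, Fi (r k) →ₐ[F] Fk k) :
    Prop :=
  ∀ x : ∀ i, Fi i, (∀ k, ιl k (x (l k)) = ιr k (x (r k))) →
    ∃! a : F, ∀ i, algebraMap F (Fi i) a = x i

variable {ιl : ∀ k, Fi (l k) →ₐ[F] Fk k} {ιr : ∀ k, Fi (r k) →ₐ[F] Fk k}

namespace IsFactorizationSystem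

theorem existsUnique_finsupp [Nonempty V] [∀ i, Nontrivial (Fi i)]
    (h : IsFactorizationSystem ιl ιr) {ι : Type*} (c : ∀ i, ι →₀ Fi i)
    (hc : ∀ j k, ιl k (c (l k) j) = ιr k (c (r k) j)) :
    ∃! a : ι →₀ F, ∀ i, Finsupp.mapRange.linearMap (Algebra.linearMap F (Fi i)) a = c i := by
  choose a ha huniq using fun j => h (c · j) (hc j)
  obtain ⟨i₀⟩ := ‹Nonempty V›
  -- `F → Fi i₀` is injective, so `a` vanishes wherever `c i₀` does.
  have hfin : (Function.support a).Finite :=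
    (c i₀).hasFiniteSupport.subset fun j hj => by simpa [← ha j i₀] using hj
  refine ⟨Finsupp.ofSupportFinite a hfin, fun i => Finsupp.ext fun j => ha j i,
    fun a' ha' => Finsupp.ext fun j => huniq j _ fun i => ?_⟩
  simpa using congr($(ha' i) j)

theorem existsUnique_tmul_one [Nonempty V] [∀ i, Nontrivial (Fi i)]
    (h : IsFactorizationSystem ιl ιr) {M : Type*} [AddCommGroup M] [Module F M]
    (y : ∀ i, M ⊗[F] Fi i)
    (hy : ∀ k, (ιl k).toLinearMap.lTensor M (y (l k)) = (ιr k).toLinearMap.lTensor M (y (r k))) :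
    ∃! m : M, ∀ i, m ⊗ₜ[F] 1 = y i := by
  classical
  let 𝔅 := Module.Basis.ofVectorSpace F M
  have hcoord : ∀ a i, 𝔅.repr.symm a ⊗ₜ[F] (1 : Fi i) = y i ↔
      Finsupp.mapRange.linearMap (Algebra.linearMap F (Fi i)) a = 𝔅.tensorRepr (y i) := by
    intro a i
    rw [← 𝔅.tensorRepr.injective.eq_iff, 𝔅.tensorRepr_tmul_one, LinearEquiv.apply_symm_apply]
  simp only [𝔅.repr.symm.bijective.existsUnique_iff, hcoord]
  refine h.existsUnique_finsupp _ fun j k => ?_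
  simpa [𝔅.tensorRepr_lTensor] using congr(𝔅.tensorRepr $(hy k) j)

end IsFactorizationSystem

end FactorizationSystem

theorem AlgHom.existsUnique_comp_eq {R A B ι : Type*} {C : ι → Type*} [CommSemiring R]
    [Semiring A] [Algebra R A] [Semiring B] [Algebra R B] [∀ i, Semiring (C i)]
    [∀ i, Algebra R (C i)] (g : ∀ i, B →ₐ[R] C i) (ψ : ∀ i, A →ₐ[R] C i)
    (h : ∀ a, ∃! b, ∀ i, g i b = ψ i a) :
    ∃! φ : A →ₐ[R] B, ∀ i, (g i).comp φ = ψ i := by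
  choose f hf huniq using h
  refine ⟨{ toFun := f
            map_one' := (huniq 1 1 fun i => by simp).symm
            map_mul' := fun x z => (huniq _ _ fun i => by simp [hf]).symm
            map_zero' := (huniq 0 0 fun i => by simp).symm
            map_add' := fun x z => (huniq _ _ fun i => by simp [hf]).symm
            commutes' := fun c => (huniq _ _ fun i => by simp).symm },
    fun i => AlgHom.ext fun a => hf a i, fun φ hφ => AlgHom.ext fun a => huniq a _ fun i => ?_⟩
  rw [← hφ i, AlgHom.comp_apply]

/-- Let `F` be a field together with a factorization inverse system of
field extensions `F_i` (vertices `i ∈ V`) and `F_k` (edges `k ∈ E`, with head `l k` and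
tail `r k`), such that `0 → F → ∏ᵢ F_i ⇉ ∏ₖ F_k` is an equalizer diagram.  For an
affine `F`-scheme `X = Spec A` and an `F`-scheme `S` (with coordinate ring
`B = Γ(S, O_S)`, so that `X(S_{F_i}) = Hom_{F-alg}(A, B ⊗_F F_i)`), the diagram
`X(S) → ∏ᵢ X(S_{F_i}) ⇉ ∏ₖ X(S_{F_k})` is an equalizer of sets: every compatible
family of points over the `F_i` descends uniquely to an `F`-point. -/
theorem stmt9 (F : Type*) [Field F]
    (V E : Type*) [Nonempty V] (l r : E → V)
    (Fi : V → Type*) (Fk : E → Type*)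
    [∀ i, Field (Fi i)] [∀ i, Algebra F (Fi i)]
    [∀ k, Field (Fk k)] [∀ k, Algebra F (Fk k)]
    (ιl : ∀ k, Fi (l k) →ₐ[F] Fk k) (ιr : ∀ k, Fi (r k) →ₐ[F] Fk k)
    (heq : ∀ x : ∀ i, Fi i, (∀ k, ιl k (x (l k)) = ιr k (x (r k))) →
      ∃! a : F, ∀ i, algebraMap F (Fi i) a = x i)
    (A B : Type*) [CommRing A] [Algebra F A] [CommRing B] [Algebra F B]
    (ψ : ∀ i, A →ₐ[F] (B ⊗[F] Fi i))
    (hψ : ∀ k, (Algebra.TensorProduct.map (AlgHom.id F B) (ιl k)).comp (ψ (l k)) =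
               (Algebra.TensorProduct.map (AlgHom.id F B) (ιr k)).comp (ψ (r k))) :
    ∃! φ : A →ₐ[F] B, ∀ i,
      (Algebra.TensorProduct.includeLeft :
        B →ₐ[F] (B ⊗[F] Fi i)).comp φ = ψ i := by
  refine AlgHom.existsUnique_comp_eq _ ψ fun a => ?_
  exact IsFactorizationSystem.existsUnique_tmul_one heq (fun i => ψ i a)
    fun k => AlgHom.congr_fun (hψ k) a
end

section
/- Let Γ be a group acting on groups G and H equivariantly for a crossed module structure ∂ : G → H. In the group C⁰ of 0-cochains (α, h) with α : Γ → G and h ∈ H under the twisted product (α,h)(β,h') = ((h·β)α, hh'), the set Z⁰ of pairs satisfying α(st) = α(s)·(s·α(t)) and ∂(α(s))·(s·h) = h for all s, t ∈ Γ is a subgroup, and the map g ↦ ((s ↦ g (s·g)⁻¹), ∂(g)) is a group homomorphism G → C⁰ whose image is a normal subgroup of Z⁰, via the identity (α,h)(δg, ∂g) = (δ(h·g), ∂(h·g))(α,h). -/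
/-!
The cocycle condition `∂(α s) * (s · h) = h` says `s · h = ∂(α s)⁻¹ h`, so by the Peiffer
identity the action of `s · h` on `G` is the action of `h` followed by conjugation by
`(α s)⁻¹`. With this rewriting rule every claim becomes a word identity in `G` or `H`, using
only the two crossed-module axioms and the `Γ`-equivariance of `∂` and of the action.
-/

variable {G H Γ : Type*} [Group G] [Group H] [Group Γ]

/-- The twisted product on 0-cochains `(α, h)`:
`(α, h)(β, h') = (s ↦ (h · β s) * α s, h * h')`. -/
def cmMul (a : H →* MulAut G) (x y : (Γ → G) × H) : (Γ → G) × H :=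
  (fun s => a x.2 (y.1 s) * x.1 s, x.2 * y.2)

/-- The identity 0-cochain. -/
def cmOne : (Γ → G) × H := (fun _ => 1, 1)

/-- The inverse of a 0-cochain. -/
def cmInv (a : H →* MulAut G) (x : (Γ → G) × H) : (Γ → G) × H :=
  (fun s => a x.2⁻¹ (x.1 s)⁻¹, x.2⁻¹)

section

variable [MulDistribMulAction Γ G] [MulDistribMulAction Γ H]

/-- The 0-cocycle condition: `α (s t) = α s * (s • α t)` and `∂(α s) * (s • h) = h`. -/
def IsZeroCocycle (δ : G →* H) (x : (Γ → G) × H) : Prop :=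
  (∀ s t : Γ, x.1 (s * t) = x.1 s * (s • x.1 t)) ∧
  (∀ s : Γ, δ (x.1 s) * (s • x.2) = x.2)

/-- The coboundary of `g`: `(s ↦ g * (s • g)⁻¹, ∂ g)`. -/
def cmCoboundary (δ : G →* H) (g : G) : (Γ → G) × H :=
  (fun s => g * (s • g)⁻¹, δ g)

section Cocycles

variable {δ : G →* H} {a : H →* MulAut G}

theorem isZeroCocycle_cmOne : IsZeroCocycle δ (cmOne : (Γ → G) × H) :=
  ⟨fun _ _ => by simp [cmOne], fun _ => by simp [cmOne]⟩

namespace IsZeroCocycle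

theorem smul_snd {x : (Γ → G) × H} (hx : IsZeroCocycle δ x) (s : Γ) :
    s • x.2 = (δ (x.1 s))⁻¹ * x.2 :=
  eq_inv_mul_iff_mul_eq.mpr (hx.2 s)

theorem map_smul_snd_apply (hconj : ∀ g g' : G, g * g' * g⁻¹ = a (δ g) g')
    {x : (Γ → G) × H} (hx : IsZeroCocycle δ x) (s : Γ) (g : G) :
    a (s • x.2) g = (x.1 s)⁻¹ * a x.2 g * x.1 s := by
  rw [hx.smul_snd, map_mul, MulAut.mul_apply, ← map_inv, ← hconj, inv_inv]

theorem cmMul (hconj : ∀ g g' : G, g * g' * g⁻¹ = a (δ g) g')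
    (hδ : ∀ (h : H) (g : G), δ (a h g) = h * δ g * h⁻¹)
    (hΓa : ∀ (s : Γ) (h : H) (g : G), s • (a h g) = a (s • h) (s • g))
    {x y : (Γ → G) × H} (hx : IsZeroCocycle δ x) (hy : IsZeroCocycle δ y) :
    IsZeroCocycle δ (cmMul a x y) := by
  refine ⟨fun s t => ?_, fun s => ?_⟩
  · simp only [_root_.cmMul, hy.1, hx.1, map_mul, smul_mul', hΓa, hx.map_smul_snd_apply hconj]
    group
  · simp only [_root_.cmMul, map_mul, hδ, smul_mul', hx.smul_snd, hy.smul_snd]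
    group

theorem cmInv (hconj : ∀ g g' : G, g * g' * g⁻¹ = a (δ g) g')
    (hδ : ∀ (h : H) (g : G), δ (a h g) = h * δ g * h⁻¹)
    (hΓa : ∀ (s : Γ) (h : H) (g : G), s • (a h g) = a (s • h) (s • g))
    {x : (Γ → G) × H} (hx : IsZeroCocycle δ x) :
    IsZeroCocycle δ (cmInv a x) := by
  refine ⟨fun s t => ?_, fun s => ?_⟩
  · have hs : s • x.2⁻¹ = x.2⁻¹ * δ (x.1 s) := by
      rw [smul_inv', hx.smul_snd, mul_inv_rev, inv_inv]
    simp only [_root_.cmInv]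
    rw [hx.1, hΓa, hs, smul_inv', map_mul a, MulAut.mul_apply, ← hconj]
    simp only [mul_inv_rev, map_mul, map_inv]
    group
  · simp only [_root_.cmInv]
    rw [hδ, map_inv δ, smul_inv', hx.smul_snd]
    group

theorem cmMul_cmCoboundary_eq_cmCoboundary_cmMul
    (hconj : ∀ g g' : G, g * g' * g⁻¹ = a (δ g) g')
    (hδ : ∀ (h : H) (g : G), δ (a h g) = h * δ g * h⁻¹)
    (hΓa : ∀ (s : Γ) (h : H) (g : G), s • (a h g) = a (s • h) (s • g))
    {x : (Γ → G) × H} (hx : IsZeroCocycle δ x) (g : G) :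
    _root_.cmMul a x (cmCoboundary δ g) = _root_.cmMul a (cmCoboundary δ (a x.2 g)) x := by
  refine Prod.ext (funext fun s => ?_) ?_
  · change a x.2 (g * (s • g)⁻¹) * x.1 s
      = a (δ (a x.2 g)) (x.1 s) * (a x.2 g * (s • a x.2 g)⁻¹)
    rw [← hconj, hΓa, hx.map_smul_snd_apply hconj, map_mul (a x.2), map_inv (a x.2)]
    group
  · change x.2 * δ g = δ (a x.2 g) * x.2
    rw [hδ]
    group

end IsZeroCocycle

theorem isZeroCocycle_cmCoboundary (hΓδ : ∀ (s : Γ) (g : G), δ (s • g) = s • δ g)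
    (g : G) :
    IsZeroCocycle δ (cmCoboundary δ g : (Γ → G) × H) := by
  refine ⟨fun s t => ?_, fun s => ?_⟩
  · simp only [cmCoboundary, mul_smul, smul_mul', smul_inv']
    group
  · simp only [cmCoboundary, map_mul, map_inv, hΓδ]
    group

end Cocycles

end

section

variable [MulDistribMulAction Γ G]

theorem cmMul_cmCoboundary {δ : G →* H} {a : H →* MulAut G}
    (hconj : ∀ g g' : G, g * g' * g⁻¹ = a (δ g) g') (g g' : G) :
    cmMul a (cmCoboundary δ g) (cmCoboundary δ g')
      = (cmCoboundary δ (g * g') : (Γ → G) × H) := by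
  refine Prod.ext (funext fun s => ?_) (map_mul δ g g').symm
  change a (δ g) (g' * (s • g')⁻¹) * (g * (s • g)⁻¹) = g * g' * (s • (g * g'))⁻¹
  rw [← hconj, smul_mul', mul_inv_rev]
  group

end

section

variable [MulDistribMulAction Γ G] [MulDistribMulAction Γ H]

/-- The 0-cocycles form a subgroup of the group of 0-cochains, and
`g ↦ (δg, ∂g)` is a homomorphism `G → C⁰` whose image is a normal subgroup of `Z⁰`,
via the identity `(α, h)(δg, ∂g) = (δ(h·g), ∂(h·g))(α, h)`. -/
theorem stmt13 (δ : G →* H) (a : H →* MulAut G)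
    (pf1 : ∀ g g' : G, g * g' * g⁻¹ = a (δ g) g')
    (pf2 : ∀ (h : H) (g : G), δ (a h g) = h * δ g * h⁻¹)
    (equivδ : ∀ (s : Γ) (g : G), δ (s • g) = s • (δ g))
    (equivA : ∀ (s : Γ) (h : H) (g : G), s • (a h g) = a (s • h) (s • g)) :
    -- `Z⁰` is a subgroup of `C⁰`
    (IsZeroCocycle δ (cmOne : (Γ → G) × H)) ∧
    (∀ x y : (Γ → G) × H, IsZeroCocycle δ x → IsZeroCocycle δ y →
      IsZeroCocycle δ (cmMul a x y)) ∧
    (∀ x : (Γ → G) × H, IsZeroCocycle δ x → IsZeroCocycle δ (cmInv a x)) ∧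
    -- `g ↦ (δg, ∂g)` is a homomorphism landing in `Z⁰`
    (∀ g : G, IsZeroCocycle δ (cmCoboundary δ g : (Γ → G) × H)) ∧
    (∀ g g' : G, cmMul a (cmCoboundary δ g) (cmCoboundary δ g')
        = (cmCoboundary δ (g * g') : (Γ → G) × H)) ∧
    -- its image is normal in `Z⁰`: `(α,h)(δg, ∂g) = (δ(h·g), ∂(h·g))(α,h)`
    (∀ x : (Γ → G) × H, IsZeroCocycle δ x → ∀ g : G,
      cmMul a x (cmCoboundary δ g) = cmMul a (cmCoboundary δ (a x.2 g)) x) :=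
  ⟨isZeroCocycle_cmOne,
    fun _ _ hx hy => hx.cmMul pf1 pf2 equivA hy,
    fun _ hx => hx.cmInv pf1 pf2 equivA,
    isZeroCocycle_cmCoboundary equivδ,
    cmMul_cmCoboundary pf1,
    fun _ hx => hx.cmMul_cmCoboundary_eq_cmCoboundary_cmMul pf1 pf2 equivA⟩
end
end

section
/- Let T be an algebraic torus over a field F with flasque resolution 1 → S → Q → T → 1 (S flasque, Q quasitrivial, so H¹(E, Q) = 0 for all field extensions E/F). Then the connecting map δ : T(F) → H¹(F, S) is surjective, and two points t₀, t₁ ∈ T(F) satisfy δ(t₀) = δ(t₁) if and only if t₁ = t₀ · j(q) for some q ∈ Q(F), where j : Q(F) → T(F) is the induced map. Consequently T(F)/R ≅ H¹(F, S), where the subgroup of elements R-equivalent to 1 equals the image of Q(F). -/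
/-!
Lift a fixed point `t = π q` of `T` to `q : Q`; then `s ↦ s • q - q` lands in `ker π = i S`, which
gives the cocycle representing `δ t`. Conversely a cocycle of `S`, pushed into `Q`, is a coboundary
`s ↦ s • q - q` because `H¹(Γ, Q) = 0`, and `π q` is then a fixed point with that image. Two lifts
`q₀, q₁` give cohomologous cocycles exactly when `q₁ - q₀` can be corrected by an element of `i S`
to a fixed point of `Q`, i.e. when `π q₁ - π q₀` lies in the image of `Q^Γ`.
-/

namespace groupCohomology

variable {Γ M N : Type*} [Group Γ] [AddCommGroup M] [AddCommGroup N]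
  [DistribMulAction Γ M] [DistribMulAction Γ N]

theorem isCocycle₁_iff {c : Γ → M} :
    IsCocycle₁ c ↔ ∀ s u : Γ, c (s * u) = c s + s • c u :=
  forall₂_congr fun _ _ => by rw [add_comm (c _)]

theorem isCoboundary₁_iff {c : Γ → M} :
    IsCoboundary₁ c ↔ ∃ x : M, ∀ s : Γ, c s = s • x - x :=
  exists_congr fun _ => forall_congr' fun _ => eq_comm

theorem isCocycle₁_of_isCoboundary₁ {c : Γ → M} (hc : IsCoboundary₁ c) : IsCocycle₁ c := by
  obtain ⟨x, hx⟩ := hc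
  intro s u
  simp only [← hx, mul_smul, smul_sub]
  abel

theorem IsCocycle₁.comp_equivariant {c : Γ → M} (hc : IsCocycle₁ c) (f : M →+ N)
    (hf : ∀ (s : Γ) (x : M), f (s • x) = s • f x) : IsCocycle₁ (f ∘ c) := by
  intro s u
  simp only [Function.comp_apply, hc s u, map_add, hf]

theorem IsCocycle₁.of_comp_injective {c : Γ → M} {f : M →+ N}
    (hf : ∀ (s : Γ) (x : M), f (s • x) = s • f x) (hf_inj : Function.Injective f)
    (hc : IsCocycle₁ (f ∘ c)) : IsCocycle₁ c := by
  intro s u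
  apply hf_inj
  simpa only [Function.comp_apply, map_add, hf] using hc s u

theorem smul_sub_eq_smul_sub_iff (m n : M) :
    (∀ s : Γ, s • m - m = s • n - n) ↔ ∀ s : Γ, s • (m - n) = m - n := by
  simp only [smul_sub, sub_eq_sub_iff_sub_eq_sub]

end groupCohomology

open groupCohomology

section ConnectingMap

variable {Γ S Q T : Type*} [Group Γ] [AddCommGroup S] [AddCommGroup Q] [AddCommGroup T]
  [DistribMulAction Γ S] [DistribMulAction Γ Q]

theorem exists_isCocycle₁_of_smul_eq_self [DistribMulAction Γ T] {i : S →+ Q} {π : Q →+ T}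
    (hi_eq : ∀ (s : Γ) (x : S), i (s • x) = s • i x)
    (hπ_eq : ∀ (s : Γ) (q : Q), π (s • q) = s • π q)
    (hi : Function.Injective i) (hπ : Function.Surjective π)
    (hexact : ∀ q : Q, π q = 0 ↔ ∃ x : S, i x = q) {t : T} (ht : ∀ s : Γ, s • t = t) :
    ∃ c : Γ → S, IsCocycle₁ c ∧ ∃ q : Q, π q = t ∧ ∀ s : Γ, i (c s) = s • q - q := by
  obtain ⟨q, rfl⟩ := hπ t
  have hker : ∀ s : Γ, ∃ x : S, i x = s • q - q := fun s =>
    (hexact _).1 (by rw [map_sub, hπ_eq, ht, sub_self])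
  choose c hc using hker
  have hcoboundary : IsCoboundary₁ (i ∘ c) := ⟨q, fun s => (hc s).symm⟩
  exact ⟨c, (isCocycle₁_of_isCoboundary₁ hcoboundary).of_comp_injective hi_eq hi, q, rfl, hc⟩

theorem exists_smul_eq_self_of_isCocycle₁ [DistribMulAction Γ T] {i : S →+ Q} {π : Q →+ T}
    (hi_eq : ∀ (s : Γ) (x : S), i (s • x) = s • i x)
    (hπ_eq : ∀ (s : Γ) (q : Q), π (s • q) = s • π q)
    (hπi : ∀ x : S, π (i x) = 0) (hQ : ∀ c : Γ → Q, IsCocycle₁ c → IsCoboundary₁ c)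
    {c : Γ → S} (hc : IsCocycle₁ c) :
    ∃ q : Q, (∀ s : Γ, s • π q = π q) ∧ ∀ s : Γ, i (c s) = s • q - q := by
  obtain ⟨q, hq⟩ := hQ _ (hc.comp_equivariant i hi_eq)
  refine ⟨q, fun s => ?_, fun s => (hq s).symm⟩
  have h : π (s • q - q) = π (i (c s)) := congrArg π (hq s)
  rwa [hπi, map_sub, hπ_eq, sub_eq_zero] at h

theorem isCoboundary₁_sub_iff_exists_fixed {i : S →+ Q} {π : Q →+ T}
    (hi_eq : ∀ (s : Γ) (x : S), i (s • x) = s • i x) (hi : Function.Injective i)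
    (hexact : ∀ q : Q, π q = 0 ↔ ∃ x : S, i x = q)
    {c₀ c₁ : Γ → S} {q₀ q₁ : Q} (hc₀ : ∀ s : Γ, i (c₀ s) = s • q₀ - q₀)
    (hc₁ : ∀ s : Γ, i (c₁ s) = s • q₁ - q₁) :
    IsCoboundary₁ (c₁ - c₀) ↔ ∃ q : Q, (∀ s : Γ, s • q = q) ∧ π q₁ = π q₀ + π q := by
  have hfixed : ∀ x : S, (∀ s : Γ, s • x - x = c₁ s - c₀ s) ↔
      ∀ s : Γ, s • (q₁ - q₀ - i x) = q₁ - q₀ - i x := fun x => by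
    rw [← smul_sub_eq_smul_sub_iff]
    refine forall_congr' fun s => ?_
    rw [← hi.eq_iff, map_sub, map_sub, hi_eq, hc₀, hc₁, smul_sub, eq_comm, sub_sub_sub_comm]
  simp only [IsCoboundary₁, Pi.sub_apply, hfixed]
  constructor
  · rintro ⟨x, hx⟩
    refine ⟨_, hx, ?_⟩
    rw [map_sub, map_sub, (hexact _).2 ⟨x, rfl⟩]
    abel
  · rintro ⟨q, hq, hπq⟩
    obtain ⟨x, hx⟩ := (hexact (q₁ - q₀ - q)).1 (by rw [map_sub, map_sub, hπq]; abel)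
    exact ⟨x, by rwa [hx, sub_sub_cancel]⟩

end ConnectingMap

/-- Let `1 → S → Q → T → 1` be a short exact sequence of
`Γ`-modules (written additively; `Γ` the Galois group), where `H¹(Γ, Q) = 0` (every
1-cocycle valued in `Q` is a coboundary; this holds when `Q` is quasitrivial).  Then
the connecting map `δ : T^Γ → H¹(Γ, S)` is (defined and) surjective, and two fixed
points `t₀, t₁ ∈ T^Γ` have `δ t₀ = δ t₁` iff `t₁ = t₀ + π q` for some `Γ`-fixed
`q ∈ Q^Γ` (the image of `Q(F)`).  Consequently `T(F)/im Q(F) ≅ H¹(F, S)`. -/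
theorem stmt17 {Γ S Q T : Type*} [Group Γ]
    [AddCommGroup S] [AddCommGroup Q] [AddCommGroup T]
    [DistribMulAction Γ S] [DistribMulAction Γ Q] [DistribMulAction Γ T]
    (i : S →+ Q) (π : Q →+ T)
    (hi_eq : ∀ (s : Γ) (x : S), i (s • x) = s • i x)
    (hπ_eq : ∀ (s : Γ) (q : Q), π (s • q) = s • π q)
    (hi : Function.Injective i) (hπ : Function.Surjective π)
    (hexact : ∀ q : Q, π q = 0 ↔ ∃ x : S, i x = q)
    (hQ : ∀ c : Γ → Q, (∀ s t : Γ, c (s * t) = c s + s • c t) →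
      ∃ x : Q, ∀ s : Γ, c s = s • x - x) :
    -- δ is defined on fixed points: every `t ∈ T^Γ` is represented by a 1-cocycle in `S`
    (∀ t : T, (∀ s : Γ, s • t = t) →
      ∃ c : Γ → S, (∀ s u : Γ, c (s * u) = c s + s • c u) ∧
        ∃ q : Q, π q = t ∧ ∀ s : Γ, i (c s) = s • q - q) ∧
    -- δ is surjective onto `H¹(Γ, S)`
    (∀ c : Γ → S, (∀ s u : Γ, c (s * u) = c s + s • c u) →
      ∃ (t : T) (q : Q), (∀ s : Γ, s • t = t) ∧ π q = t ∧
        ∀ s : Γ, i (c s) = s • q - q) ∧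
    -- `δ t₀ = δ t₁` iff `t₁ = t₀ + π q` for some fixed `q ∈ Q^Γ`
    (∀ (t₀ t₁ : T) (c₀ c₁ : Γ → S) (q₀ q₁ : Q),
      (∀ s : Γ, s • t₀ = t₀) → (∀ s : Γ, s • t₁ = t₁) →
      π q₀ = t₀ → (∀ s : Γ, i (c₀ s) = s • q₀ - q₀) →
      π q₁ = t₁ → (∀ s : Γ, i (c₁ s) = s • q₁ - q₁) →
      ((∃ x : S, ∀ s : Γ, c₁ s - c₀ s = s • x - x) ↔
        ∃ q : Q, (∀ s : Γ, s • q = q) ∧ t₁ = t₀ + π q)) := by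
  have hπi : ∀ x : S, π (i x) = 0 := fun x => (hexact _).2 ⟨x, rfl⟩
  have hQ_trivial : ∀ c : Γ → Q, IsCocycle₁ c → IsCoboundary₁ c := fun c hc =>
    isCoboundary₁_iff.2 (hQ c (isCocycle₁_iff.1 hc))
  refine ⟨fun t ht => ?_, fun c hc => ?_, ?_⟩
  · simpa only [isCocycle₁_iff] using
      exists_isCocycle₁_of_smul_eq_self hi_eq hπ_eq hi hπ hexact ht
  · obtain ⟨q, hfixed, hq⟩ :=
      exists_smul_eq_self_of_isCocycle₁ hi_eq hπ_eq hπi hQ_trivial (isCocycle₁_iff.2 hc)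
    exact ⟨π q, q, hfixed, rfl, hq⟩
  · rintro t₀ t₁ c₀ c₁ q₀ q₁ - - rfl hc₀ rfl hc₁
    rw [← isCoboundary₁_iff]
    exact isCoboundary₁_sub_iff_exists_fixed hi_eq hi hexact hc₀ hc₁
end
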